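/- Let X be a locally compact Hausdorff space, let φ : ℂ × ℂ → [0,∞) be a continuous map satisfying (inc) and satisfying φ(t,0) = 0 = φ(0,t) for all real t ≥ 0, let A be a subset of C₀(X), let x₀ be a strong boundary point of A, let f ∈ A and ε > 0. Then there exists h ∈ V_{x₀}(A) such that ρ₊(f,h) < ρ₊(|f(x₀)| + ε, 1) = φ(|f(x₀)|+ε, 1) + φ(1, |f(x₀)|+ε). -/

import Mathlib

/-! Take `c` with `|f x₀| < c < |f x₀| + ε`. Since `φ(‖f‖, 0) = 0 = φ(0, ‖f‖)` and `φ` is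
continuous, some `δ > 0` gives `φ(‖f‖, δ) < φ(c, 1)` and `φ(δ, ‖f‖) < φ(1, c)`. A peaking function
`h ∈ V_{x₀}(A)` with `|h| < δ` off `{|f| < c}` then has `φ(f, h) ≤ φ(c, 1)` and `φ(h, f) ≤ φ(1, c)`
everywhere, by (inc) on each of the two regions; strict (inc) finishes, as `c < |f x₀| + ε`. -/

open scoped ZeroAtInfty Pointwise
open Filter Topology

set_option maxHeartbeats 1000000
set_option synthInstance.maxHeartbeats 1000000

/-- The (inc) property for a two-variable function `φ : ℂ → ℂ → ℝ`. -/
def IncProp (φ : ℂ → ℂ → ℝ) : Prop :=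
  (∀ s₁ s₂ t : ℂ, ‖s₁‖ ≤ ‖s₂‖ →
      φ s₁ t ≤ φ s₂ t ∧ φ t s₁ ≤ φ t s₂) ∧
  (∀ s₁ s₂ t : ℂ, ‖s₁‖ < ‖s₂‖ → t ≠ 0 →
      φ s₁ t < φ s₂ t ∧ φ t s₁ < φ t s₂)

/-- The (con) property. -/
def ConProp (φ : ℂ → ℂ → ℝ) : Prop :=
  ∀ (n : ℕ), 0 < n → ∀ (s : Fin n → ℂ) (t : ℂ),
    φ ((1 / (n : ℂ)) * ∑ i, s i) t ≤ (1 / (n : ℝ)) * ∑ i, φ (s i) t ∧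
    φ t ((1 / (n : ℂ)) * ∑ i, s i) ≤ (1 / (n : ℝ)) * ∑ i, φ t (s i)

/-- sup of φ(f,g) over the space (the supremum norm of the nonnegative function φ(f,g)). -/
noncomputable def supPhi {X : Type*} (φ : ℂ → ℂ → ℝ) (f g : X → ℂ) : ℝ :=
  ⨆ x, φ (f x) (g x)

noncomputable def rhoPlus {X : Type*} (φ : ℂ → ℂ → ℝ) (f g : X → ℂ) : ℝ :=
  supPhi φ f g + supPhi φ g f

noncomputable def rhoMax {X : Type*} (φ : ℂ → ℂ → ℝ) (f g : X → ℂ) : ℝ :=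
  max (supPhi φ f g) (supPhi φ g f)

noncomputable def rhoPlusScalar (φ : ℂ → ℂ → ℝ) (r s : ℂ) : ℝ := φ r s + φ s r

noncomputable def rhoMaxScalar (φ : ℂ → ℂ → ℝ) (r s : ℂ) : ℝ := max (φ r s) (φ s r)

/-- Generic ρ, with a Boolean selecting between ρ₊ (true) and ρ_max (false). -/
noncomputable def rhoGen {X : Type*} (c : Bool) (φ : ℂ → ℂ → ℝ) (f g : X → ℂ) : ℝ :=
  if c then rhoPlus φ f g else rhoMax φ f g

noncomputable def rhoGenScalar (c : Bool) (φ : ℂ → ℂ → ℝ) (r s : ℂ) : ℝ :=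
  if c then rhoPlusScalar φ r s else rhoMaxScalar φ r s

/-- `x₀` is a strong boundary point of `A ⊆ C₀(X)`. -/
def IsStrongBoundaryPoint {X : Type*} [TopologicalSpace X]
    (A : Set C₀(X, ℂ)) (x₀ : X) : Prop :=
  ∀ ε > (0 : ℝ), ∀ V ∈ 𝓝 x₀, ∃ f ∈ A, f x₀ = 1 ∧ ‖f‖ = 1 ∧
    ∀ x ∉ V, ‖f x‖ < ε

/-- V_{x₀}(A). -/
def Vset {X : Type*} [TopologicalSpace X] (A : Set C₀(X, ℂ)) (x₀ : X) : Set C₀(X, ℂ) :=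
  {f ∈ A | f x₀ = 1 ∧ ‖f‖ = 1}

/-- F_{x₀}(A). -/
def Fset {X : Type*} [TopologicalSpace X] (A : Set C₀(X, ℂ)) (x₀ : X) : Set C₀(X, ℂ) :=
  {f ∈ A | ‖f x₀‖ = 1 ∧ ‖f‖ = 1}

/-- The maximum modulus set M(f). -/
def maxSet {X : Type*} [TopologicalSpace X] (f : C₀(X, ℂ)) : Set X :=
  {x | ‖f x‖ = ‖f‖}

abbrev NormedSpace.Dual (𝕜 : Type*) [NontriviallyNormedField 𝕜] (E : Type*)
    [SeminormedAddCommGroup E] [NormedSpace 𝕜 E] : Type _ := E →L[𝕜] 𝕜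

/-- Evaluation at a point, as a continuous linear functional on a subspace of C₀(X). -/
noncomputable def evalDual {X : Type*} [TopologicalSpace X]
    (𝒜 : Submodule ℂ C₀(X, ℂ)) (x : X) : NormedSpace.Dual ℂ 𝒜 :=
  LinearMap.mkContinuous
    { toFun := fun f => (f : C₀(X, ℂ)) x
      map_add' := fun f g => rfl
      map_smul' := fun c f => rfl }
    1
    (fun f => by
      rw [one_mul, ← Submodule.norm_coe]
      exact ((f : C₀(X, ℂ)).toBCF.norm_coe_le_norm x).trans_eq
        ZeroAtInftyContinuousMap.norm_toBCF_eq_norm)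

/-- `x` lies in the Choquet boundary of a subspace `𝒜` of `C₀(X)`: the evaluation functional is
an extreme point of the closed unit ball of the dual space. -/
def InChoquetBoundary {X : Type*} [TopologicalSpace X]
    (𝒜 : Submodule ℂ C₀(X, ℂ)) (x : X) : Prop :=
  evalDual 𝒜 x ∈
    Set.extremePoints ℝ (Metric.closedBall (0 : NormedSpace.Dual ℂ 𝒜) 1)

/-- A function algebra on `X`: a closed subalgebra of `C₀(X)` strongly separating points. -/
def IsFunctionAlgebra {X : Type*} [TopologicalSpace X]
    (𝒜 : NonUnitalSubalgebra ℂ C₀(X, ℂ)) : Prop :=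
  IsClosed (𝒜 : Set C₀(X, ℂ)) ∧
  (∀ x y : X, x ≠ y → ∃ f ∈ 𝒜, f x ≠ f y) ∧
  (∀ x : X, ∃ g ∈ 𝒜, g x ≠ (0 : ℂ))

/-- `|A| ⊆ |𝒜|`. -/
def ModulusSubset {X : Type*} [TopologicalSpace X]
    (A 𝒜 : Set C₀(X, ℂ)) : Prop :=
  ∀ f ∈ A, ∃ g ∈ 𝒜, ∀ x, ‖f x‖ = ‖g x‖

/-- The positive elements of a subset `S` of `C₀(X)`. -/
def posPart {X : Type*} [TopologicalSpace X] (S : Set C₀(X, ℂ)) : Set C₀(X, ℂ) :=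
  {f ∈ S | ∀ x, ∃ r : ℝ, 0 ≤ r ∧ f x = r}

theorem ZeroAtInftyContinuousMap.norm_apply_le {X : Type*} [TopologicalSpace X]
    (f : C₀(X, ℂ)) (x : X) : ‖f x‖ ≤ ‖f‖ :=
  (f.toBCF.norm_coe_le_norm x).trans_eq ZeroAtInftyContinuousMap.norm_toBCF_eq_norm

namespace IncProp

variable {φ : ℂ → ℂ → ℝ}

theorem swap (hinc : IncProp φ) : IncProp (Function.swap φ) :=
  ⟨fun s₁ s₂ t h => (hinc.1 s₁ s₂ t h).symm, fun s₁ s₂ t h ht => (hinc.2 s₁ s₂ t h ht).symm⟩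

theorem le_of_norm_le (hinc : IncProp φ) {s₁ s₂ t₁ t₂ : ℂ} (hs : ‖s₁‖ ≤ ‖s₂‖)
    (ht : ‖t₁‖ ≤ ‖t₂‖) : φ s₁ t₁ ≤ φ s₂ t₂ :=
  (hinc.1 s₁ s₂ t₁ hs).1.trans (hinc.1 t₁ t₂ s₂ ht).2

theorem lt_of_norm_lt (hinc : IncProp φ) {s₁ s₂ t : ℂ} (hs : ‖s₁‖ < ‖s₂‖) (ht : t ≠ 0) :
    φ s₁ t < φ s₂ t :=
  (hinc.2 s₁ s₂ t hs ht).1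

theorem pos_of_zero_eq (hinc : IncProp φ) {s t : ℂ} (h0 : φ 0 t = 0) (hs : s ≠ 0)
    (ht : t ≠ 0) : 0 < φ s t :=
  h0 ▸ hinc.lt_of_norm_lt (by simpa using hs) ht

theorem supPhi_le {X : Type*} (hinc : IncProp φ) {f h : X → ℂ} {M c u δ : ℂ}
    (hf : ∀ x, ‖f x‖ ≤ ‖M‖) (hh : ∀ x, ‖h x‖ ≤ ‖u‖)
    (hsmall : ∀ x, ‖c‖ ≤ ‖f x‖ → ‖h x‖ ≤ ‖δ‖)
    (hMδ : φ M δ ≤ φ c u) (hpos : 0 ≤ φ c u) : supPhi φ f h ≤ φ c u := by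
  refine Real.iSup_le (fun x => ?_) hpos
  rcases le_total ‖f x‖ ‖c‖ with hfc | hcf
  · exact hinc.le_of_norm_le hfc (hh x)
  · exact (hinc.le_of_norm_le (hf x) (hsmall x hcf)).trans hMδ

end IncProp

theorem eventually_apply_ofReal_lt {φ : ℂ → ℂ → ℝ}
    (hφc : Continuous fun p : ℂ × ℂ => φ p.1 p.2) {M : ℂ} {a : ℝ} (hM : φ M 0 = 0)
    (ha : 0 < a) : ∀ᶠ δ : ℝ in 𝓝 0, φ M δ < a := by
  have hcont : Continuous fun δ : ℝ => φ M δ :=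
    hφc.comp (continuous_const.prodMk Complex.continuous_ofReal)
  have htends : Tendsto (fun δ : ℝ => φ M δ) (𝓝 0) (𝓝 0) := by
    simpa [hM] using hcont.tendsto 0
  exact htends.eventually_lt_const ha

theorem stmt5_general {X : Type*} [TopologicalSpace X]
    (φ : ℂ → ℂ → ℝ) (hφc : Continuous fun p : ℂ × ℂ => φ p.1 p.2)
    (hinc : IncProp φ)
    (hφz : ∀ t : ℝ, 0 ≤ t → φ (t : ℂ) 0 = 0 ∧ φ 0 (t : ℂ) = 0)
    (A : Set C₀(X, ℂ)) (x₀ : X) (hx₀ : IsStrongBoundaryPoint A x₀)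
    (f : C₀(X, ℂ)) (ε : ℝ) (hε : 0 < ε) :
    ∃ h ∈ Vset A x₀,
      rhoPlus φ (fun x => f x) (fun x => h x) <
        rhoPlusScalar φ ((‖f x₀‖ + ε : ℝ) : ℂ) 1 := by
  set c : ℝ := ‖f x₀‖ + ε / 2
  have hc : 0 < c := by positivity
  have hcε : ‖(c : ℂ)‖ < ‖((‖f x₀‖ + ε : ℝ) : ℂ)‖ := by
    rw [Complex.norm_of_nonneg hc.le, Complex.norm_of_nonneg (by positivity)]
    simp only [c]
    linarith
  have hc₀ : (c : ℂ) ≠ 0 := Complex.ofReal_ne_zero.mpr hc.ne'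
  have hpos₁ : 0 < φ c 1 :=
    hinc.pos_of_zero_eq (by simpa using (hφz 1 zero_le_one).2) hc₀ one_ne_zero
  have hpos₂ : 0 < φ 1 c :=
    hinc.swap.pos_of_zero_eq (by simpa using (hφz 1 zero_le_one).1) hc₀ one_ne_zero
  have hsmall : ∀ᶠ δ : ℝ in 𝓝 0, φ ‖f‖ δ < φ c 1 ∧ φ δ ‖f‖ < φ 1 c :=
    (eventually_apply_ofReal_lt hφc (hφz _ (norm_nonneg f)).1 hpos₁).and
      (eventually_apply_ofReal_lt (φ := Function.swap φ) (hφc.comp continuous_swap)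
        (hφz _ (norm_nonneg f)).2 hpos₂)
  obtain ⟨δ, ⟨hδ₁, hδ₂⟩, hδ⟩ :=
    ((hsmall.filter_mono nhdsWithin_le_nhds).and (self_mem_nhdsWithin (s := Set.Ioi 0))).exists
  have hV : {x | ‖f x‖ < c} ∈ 𝓝 x₀ :=
    (isOpen_lt (continuous_norm.comp f.continuous) continuous_const).mem_nhds
      (lt_add_of_pos_right _ (half_pos hε) : ‖f x₀‖ < c)
  obtain ⟨h, hhA, hhx₀, hhnorm, hhsmall⟩ := hx₀ δ hδ _ hV
  refine ⟨h, ⟨hhA, hhx₀, hhnorm⟩, ?_⟩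
  have hfM : ∀ x, ‖f x‖ ≤ ‖((‖f‖ : ℝ) : ℂ)‖ := fun x => by
    simpa using f.norm_apply_le x
  have hh1 : ∀ x, ‖h x‖ ≤ ‖(1 : ℂ)‖ := fun x => by
    simpa [hhnorm] using h.norm_apply_le x
  have hoff : ∀ x, ‖(c : ℂ)‖ ≤ ‖f x‖ → ‖h x‖ ≤ ‖(δ : ℂ)‖ := fun x hx => by
    rw [Complex.norm_of_nonneg hc.le] at hx
    rw [Complex.norm_of_nonneg hδ.le]
    exact (hhsmall x (not_lt.mpr hx)).le
  have hsup₁ := hinc.supPhi_le hfM hh1 hoff hδ₁.le hpos₁.le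
  have hsup₂ := hinc.swap.supPhi_le hfM hh1 hoff hδ₂.le hpos₂.le
  exact add_lt_add (hsup₁.trans_lt (hinc.lt_of_norm_lt hcε one_ne_zero))
    (hsup₂.trans_lt (hinc.swap.lt_of_norm_lt hcε one_ne_zero))

theorem stmt5 {X : Type*} [TopologicalSpace X] [LocallyCompactSpace X] [T2Space X]
    (φ : ℂ → ℂ → ℝ) (hφc : Continuous fun p : ℂ × ℂ => φ p.1 p.2)
    (hφ0 : ∀ s t : ℂ, 0 ≤ φ s t) (hinc : IncProp φ)
    (hφz : ∀ t : ℝ, 0 ≤ t → φ (t : ℂ) 0 = 0 ∧ φ 0 (t : ℂ) = 0)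
    (A : Set C₀(X, ℂ)) (x₀ : X) (hx₀ : IsStrongBoundaryPoint A x₀)
    (f : C₀(X, ℂ)) (hf : f ∈ A) (ε : ℝ) (hε : 0 < ε) :
    ∃ h ∈ Vset A x₀,
      rhoPlus φ (fun x => f x) (fun x => h x) <
        rhoPlusScalar φ ((‖f x₀‖ + ε : ℝ) : ℂ) 1 :=
  stmt5_general φ hφc hinc hφz A x₀ hx₀ f ε hε
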